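/- arXiv:2302.10743 — 3 statements merged into one kernel-verified Lean document; each statement's English description precedes it below -/
import Mathlib

section
/- Let A, B, P, Q be real trigonometric polynomials with P(t) ≠ 0 for all t ∈ ℝ, Q not identically zero, and P and Q having no common irreducible factors in the ring of real trigonometric polynomials. Then Q(t) − P(t)x = 0 is an invariant curve of the Abel equation x' = A(t)x^3 + B(t)x^2 if and only if Q is a constant c ∈ ℝ, c ≠ 0, and there exists a real trigonometric polynomial R(t) such that A(t) = (P(t)/c)·R(t) and B(t) = −P'(t)/c − R(t). In this case the cofactor equals A(t)x² − (P'(t)/c)x. -/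
/-!
Evaluating the invariance identity on the curve `x = Q/P` gives `Q' P² = Q (P' P + A Q² + B Q P)`.
Writing a trigonometric polynomial as `F t = e^{-iℓt} f(e^{it})` with `f ∈ ℂ[X]` turns this
into a divisibility `q ∣ X^k q' p²` in `ℂ[X]`. A common nonzero root `α` of `p` and `q` lies off
the unit circle, because `P` has no real zeros, and then `|e^{it} - α|²` is a common irreducible
factor of `P` and `Q`. Hence `q` is a monomial, `Q' = 0`, and `Q` is a nonzero constant `c`. The
identity then reduces to `P' P + A c² + B c P = 0`, which is the stated shape of `A` and `B`; the
cofactor is determined off the curve, hence everywhere by continuity.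
-/

open Real Set

noncomputable section

/-- The ring `ℝ[cos t, sin t]` of real trigonometric polynomials, realized as the
subalgebra of `ℝ → ℝ` generated by `cos` and `sin`. -/
def TrigPolyRing : Subalgebra ℝ (ℝ → ℝ) := Algebra.adjoin ℝ {Real.cos, Real.sin}

/-- The curve `Q(t) - P(t)x = 0` is an invariant curve of the Abel equation
`x' = A(t)x³ + B(t)x²`. -/
def IsInvariantCurve (A B Q P : ℝ → ℝ) : Prop :=
  ∃ K : ℝ → ℝ → ℝ, Continuous (Function.uncurry K) ∧
    ∀ t x : ℝ,
      (deriv Q t - deriv P t * x) + (A t * x ^ 3 + B t * x ^ 2) * (-(P t)) =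
        K t x * (Q t - P t * x)

open Complex Polynomial ComplexConjugate

namespace TrigPolyRing

theorem cos_mem : Real.cos ∈ TrigPolyRing := Algebra.subset_adjoin (by simp)

theorem sin_mem : Real.sin ∈ TrigPolyRing := Algebra.subset_adjoin (by simp)

theorem exists_hasDerivAt {F : ℝ → ℝ} (hF : F ∈ TrigPolyRing) :
    ∃ G ∈ TrigPolyRing, ∀ t, HasDerivAt F (G t) t := by
  induction hF using Algebra.adjoin_induction with
  | mem F hF =>
    rcases hF with rfl | rfl
    · exact ⟨-Real.sin, neg_mem sin_mem, Real.hasDerivAt_cos⟩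
    · exact ⟨Real.cos, cos_mem, Real.hasDerivAt_sin⟩
  | algebraMap r => exact ⟨0, zero_mem _, fun t => hasDerivAt_const t r⟩
  | add F G _ _ hF hG =>
    obtain ⟨F', hF', hF⟩ := hF
    obtain ⟨G', hG', hG⟩ := hG
    exact ⟨F' + G', add_mem hF' hG', fun t => (hF t).add (hG t)⟩
  | mul F G hFmem hGmem hF hG =>
    obtain ⟨F', hF', hF⟩ := hF
    obtain ⟨G', hG', hG⟩ := hG
    exact ⟨F' * G + F * G', add_mem (mul_mem hF' hGmem) (mul_mem hFmem hG'),
      fun t => (hF t).mul (hG t)⟩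

theorem differentiable {F : ℝ → ℝ} (hF : F ∈ TrigPolyRing) : Differentiable ℝ F := by
  obtain ⟨G, -, hG⟩ := exists_hasDerivAt hF
  exact fun t => (hG t).differentiableAt

theorem deriv_mem {F : ℝ → ℝ} (hF : F ∈ TrigPolyRing) : deriv F ∈ TrigPolyRing := by
  obtain ⟨G, hG, hFG⟩ := exists_hasDerivAt hF
  rwa [show deriv F = G from funext fun t => (hFG t).deriv]

end TrigPolyRing

theorem Polynomial.eq_of_eval_circleExp_eq {f g : ℂ[X]}
    (h : ∀ t : ℝ, f.eval (Circle.exp t : ℂ) = g.eval (Circle.exp t : ℂ)) : f = g := by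
  refine eq_of_infinite_eval_eq f g (Set.Infinite.mono ?_ ((Ico_infinite two_pi_pos).image
    (Circle.coe_injective.comp_injOn (Circle.exp_injOn_Ico (by rw [sub_zero])))))
  rintro _ ⟨t, -, rfl⟩
  exact h t

theorem hasDerivAt_circleExp_pow (n : ℕ) (t : ℝ) :
    HasDerivAt (fun s : ℝ => (Circle.exp s : ℂ) ^ n) (n * I * (Circle.exp t : ℂ) ^ n) t := by
  have h := (((hasDerivAt_id t).ofReal_comp).mul_const (n * I)).cexp
  simp only [id, ofReal_one, one_mul] at h
  convert h using 1
  · funext s; rw [Circle.coe_exp, ← Complex.exp_nat_mul]; ring_nf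
  · rw [Circle.coe_exp, ← Complex.exp_nat_mul]; ring_nf

theorem circleExp_mul_circleExp_neg (t : ℝ) : (Circle.exp t : ℂ) * Circle.exp (-t) = 1 := by
  rw [Circle.exp_neg, Circle.coe_inv, mul_inv_cancel₀ (Circle.coe_ne_zero _)]

theorem ofReal_cos_eq_circleExp (t : ℝ) :
    (Real.cos t : ℂ) = ((Circle.exp t : ℂ) + Circle.exp (-t)) / 2 := by
  rw [ofReal_cos, Complex.cos, Circle.coe_exp, Circle.coe_exp]; push_cast; ring_nf

theorem ofReal_sin_eq_circleExp (t : ℝ) :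
    (Real.sin t : ℂ) = ((Circle.exp (-t) : ℂ) - Circle.exp t) * I / 2 := by
  rw [ofReal_sin, Complex.sin, Circle.coe_exp, Circle.coe_exp]; push_cast; ring_nf

/-- `F t = e^{-iℓt} f(e^{it})`: a trigonometric polynomial as a Laurent polynomial in `e^{it}`,
with the negative powers cleared by the shift `ℓ`. -/
def HasPolyRep (F : ℝ → ℝ) (ℓ : ℕ) (f : ℂ[X]) : Prop :=
  ∀ t, (F t : ℂ) * (Circle.exp t : ℂ) ^ ℓ = f.eval (Circle.exp t : ℂ)

def complexTrigPolyRing : Subalgebra ℂ (ℝ → ℂ) where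
  carrier := {w | (fun t => (w t).re) ∈ TrigPolyRing ∧ (fun t => (w t).im) ∈ TrigPolyRing}
  mul_mem' hv hw := by
    refine ⟨?_, ?_⟩
    · convert sub_mem (mul_mem hv.1 hw.1) (mul_mem hv.2 hw.2) using 1
      funext t; simp
    · convert add_mem (mul_mem hv.1 hw.2) (mul_mem hv.2 hw.1) using 1
      funext t; simp
  add_mem' hv hw := ⟨add_mem hv.1 hw.1, add_mem hv.2 hw.2⟩
  algebraMap_mem' c := ⟨TrigPolyRing.algebraMap_mem c.re, TrigPolyRing.algebraMap_mem c.im⟩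

namespace HasPolyRep

variable {F G : ℝ → ℝ} {ℓ m : ℕ} {f g : ℂ[X]}

theorem const (r : ℝ) : HasPolyRep (fun _ => r) 0 (C (r : ℂ)) := fun t => by simp

theorem add (hF : HasPolyRep F ℓ f) (hG : HasPolyRep G m g) :
    HasPolyRep (F + G) (ℓ + m) (f * X ^ m + g * X ^ ℓ) := fun t => by
  simp only [Pi.add_apply, ofReal_add, eval_add, eval_mul, eval_pow, eval_X, pow_add]
  linear_combination (Circle.exp t : ℂ) ^ m * hF t + (Circle.exp t : ℂ) ^ ℓ * hG t

theorem mul (hF : HasPolyRep F ℓ f) (hG : HasPolyRep G m g) :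
    HasPolyRep (F * G) (ℓ + m) (f * g) := fun t => by
  simp only [Pi.mul_apply, ofReal_mul, eval_mul, pow_add]
  linear_combination (G t * (Circle.exp t : ℂ) ^ m) * hF t + f.eval (Circle.exp t : ℂ) * hG t

theorem X_pow_mul_eq (hf : HasPolyRep F ℓ f) (hg : HasPolyRep F m g) : X ^ m * f = X ^ ℓ * g := by
  refine eq_of_eval_circleExp_eq fun t => ?_
  simp only [eval_mul, eval_pow, eval_X, ← hf t, ← hg t]
  ring

theorem mem (hF : HasPolyRep F ℓ f) : F ∈ TrigPolyRing := by
  have hE : (fun t => (Circle.exp t : ℂ)) ∈ complexTrigPolyRing := by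
    refine ⟨?_, ?_⟩
    · convert TrigPolyRing.cos_mem using 1
      funext t; simp [Circle.coe_exp, exp_ofReal_mul_I_re]
    · convert TrigPolyRing.sin_mem using 1
      funext t; simp [Circle.coe_exp, exp_ofReal_mul_I_im]
  have hE' : (fun t => (Circle.exp (-t) : ℂ)) ∈ complexTrigPolyRing := by
    refine ⟨?_, ?_⟩
    · convert TrigPolyRing.cos_mem using 1
      funext t; simp only [Circle.coe_exp, exp_ofReal_mul_I_re, Real.cos_neg]
    · convert neg_mem TrigPolyRing.sin_mem using 1
      funext t; simp only [Circle.coe_exp, exp_ofReal_mul_I_im, Real.sin_neg, Pi.neg_apply]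
  have hf : (fun t => f.eval (Circle.exp t : ℂ)) ∈ complexTrigPolyRing := by
    convert Algebra.adjoin_le (Set.singleton_subset_iff.2 hE)
      (aeval_mem_adjoin_singleton ℂ _ (p := f)) using 1
    funext t; simp
  convert (mul_mem (pow_mem hE' ℓ) hf).1 using 1
  funext t
  rw [Pi.mul_apply, Pi.pow_apply, ← hF t, mul_left_comm, ← mul_pow,
    mul_comm (Circle.exp (-t) : ℂ), circleExp_mul_circleExp_neg]
  simp

theorem ofReal_deriv_mul {F' : ℝ → ℝ} (hF : HasPolyRep F ℓ f) {t : ℝ}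
    (hF' : HasDerivAt F (F' t) t) :
    (F' t : ℂ) * (Circle.exp t : ℂ) ^ ℓ = I * ((Circle.exp t : ℂ) *
      f.derivative.eval (Circle.exp t : ℂ) - ℓ * (F t : ℂ) * (Circle.exp t : ℂ) ^ ℓ) := by
  have hprod := (hF'.ofReal_comp.mul (hasDerivAt_circleExp_pow ℓ t)).congr_of_eventuallyEq
    (.of_forall fun s => (hF s).symm)
  have hcomp := (f.hasDerivAt _).comp t (hasDerivAt_circleExp_pow 1 t)
  simp only [pow_one, Nat.cast_one, one_mul] at hcomp
  linear_combination hprod.unique hcomp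

theorem deriv (hF : HasPolyRep F ℓ f) {F' : ℝ → ℝ} (hF' : ∀ t, HasDerivAt F (F' t) t) :
    HasPolyRep F' ℓ (C I * (X * derivative f - C (ℓ : ℂ) * f)) := by
  intro t
  rw [hF.ofReal_deriv_mul (hF' t), mul_assoc _ (F t : ℂ), hF t]
  simp

theorem deriv_eq_zero_of_eq_C_mul_X_pow {c : ℂ} {b : ℕ} (hF : HasPolyRep F ℓ (C c * X ^ b))
    (hd : Differentiable ℝ F) (t : ℝ) : _root_.deriv F t = 0 := by
  have h := hF.ofReal_deriv_mul (hd t).hasDerivAt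
  have hX : (Circle.exp t : ℂ) * (derivative (C c * X ^ b)).eval (Circle.exp t : ℂ) =
      b * (F t : ℂ) * (Circle.exp t : ℂ) ^ ℓ := by
    rw [mul_assoc, hF t, derivative_C_mul_X_pow]
    cases b <;> simp [pow_succ]; ring
  rw [hX, ← sub_mul, ← mul_assoc] at h
  have h' := mul_right_cancel₀ (pow_ne_zero ℓ (Circle.coe_ne_zero _)) h
  simpa using congrArg Complex.re h'

theorem eval_ne_zero (hF : HasPolyRep F ℓ f) (hF0 : ∀ t, F t ≠ 0) {α : ℂ} (hα : ‖α‖ = 1) :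
    f.eval α ≠ 0 := by
  obtain ⟨t, rfl⟩ := (Complex.norm_eq_one_iff α).1 hα
  rw [← Circle.coe_exp, ← hF t]
  exact mul_ne_zero (ofReal_ne_zero.2 (hF0 t)) (pow_ne_zero _ (Circle.coe_ne_zero _))

theorem eval_inv_conj_eq_zero (hF : HasPolyRep F ℓ f) {α : ℂ} (hα : α ≠ 0)
    (hroot : f.eval α = 0) : f.eval (conj α)⁻¹ = 0 := by
  have hdeg : (f.map (starRingEnd ℂ)).natDegree = f.natDegree :=
    natDegree_map_eq_of_injective (RingHom.injective _) f
  have eval_map_conj (z : ℂ) : (f.map (starRingEnd ℂ)).eval (conj z) = conj (f.eval z) := by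
    rw [eval_map, eval₂_at_apply]
  -- `F` is real: on the unit circle, `conj (f z) = z ^ (-2ℓ) * f z`.
  have hfg : X ^ f.natDegree * f = X ^ (2 * ℓ) * reverse (f.map (starRingEnd ℂ)) := by
    refine eq_of_eval_circleExp_eq fun t => ?_
    have hz : (Circle.exp t : ℂ)⁻¹ = conj (Circle.exp t : ℂ) := by
      rw [← Circle.coe_inv, Circle.coe_inv_eq_conj]
    have := invertibleOfNonzero (inv_ne_zero (Circle.coe_ne_zero (Circle.exp t)))
    have hg := eval₂_reverse_mul_pow (RingHom.id ℂ) (Circle.exp t : ℂ)⁻¹ (f.map (starRingEnd ℂ))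
    rw [invOf_eq_inv, inv_inv, hdeg, eval₂_id, eval₂_id, hz, eval_map_conj, ← hF t, ← hz,
      map_mul, map_pow, conj_ofReal, ← hz] at hg
    simp only [eval_mul, eval_pow, eval_X, ← hF t]
    have hzw := mul_inv_cancel₀ (Circle.coe_ne_zero (Circle.exp t))
    generalize (Circle.exp t : ℂ)⁻¹ = w at hg hzw
    generalize (Circle.exp t : ℂ) = z at hg hzw ⊢
    have hℓ : (z * w) ^ ℓ = 1 := by rw [hzw, one_pow]
    have hD : (z * w) ^ f.natDegree = 1 := by rw [hzw, one_pow]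
    linear_combination (-z ^ f.natDegree * F t * z ^ ℓ) * hℓ -
      z ^ (2 * ℓ) * z ^ f.natDegree * hg +
      z ^ (2 * ℓ) * eval z (reverse (f.map (starRingEnd ℂ))) * hD
  have := invertibleOfNonzero ((map_ne_zero (starRingEnd ℂ)).2 hα)
  have hg := (eval₂_reverse_eq_zero_iff (RingHom.id ℂ) (conj α) (f.map (starRingEnd ℂ))).2
    (by rw [eval₂_id, eval_map_conj, hroot, map_zero])
  rw [invOf_eq_inv, eval₂_id] at hg
  have h := congrArg (eval (conj α)⁻¹) hfg
  simp only [eval_mul, eval_pow, eval_X, hg, mul_zero] at h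
  exact (mul_eq_zero.1 h).resolve_left (pow_ne_zero _ (by simpa using hα))

end HasPolyRep

theorem exists_hasPolyRep {F : ℝ → ℝ} (hF : F ∈ TrigPolyRing) : ∃ ℓ f, HasPolyRep F ℓ f := by
  induction hF using Algebra.adjoin_induction with
  | mem F hF =>
    refine ⟨1, ?_⟩
    rcases hF with rfl | rfl
    · refine ⟨C (1 / 2) * (X ^ 2 + 1), fun t => ?_⟩
      simp only [eval_mul, eval_C, eval_add, eval_pow, eval_X, eval_one, pow_one]
      rw [ofReal_cos_eq_circleExp]
      linear_combination (1 / 2 : ℂ) * circleExp_mul_circleExp_neg t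
    · refine ⟨C (I / 2) * (1 - X ^ 2), fun t => ?_⟩
      simp only [eval_mul, eval_C, eval_sub, eval_pow, eval_X, eval_one, pow_one]
      rw [ofReal_sin_eq_circleExp]
      linear_combination (I / 2) * circleExp_mul_circleExp_neg t
  | algebraMap r => exact ⟨0, _, HasPolyRep.const r⟩
  | add F G _ _ hF hG =>
    obtain ⟨ℓ, f, hf⟩ := hF
    obtain ⟨m, g, hg⟩ := hG
    exact ⟨_, _, hf.add hg⟩
  | mul F G _ _ hF hG =>
    obtain ⟨ℓ, f, hf⟩ := hF
    obtain ⟨m, g, hg⟩ := hG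
    exact ⟨_, _, hf.mul hg⟩

section CircleDistSq

theorem hasPolyRep_normSq_circleExp_sub (α : ℂ) :
    HasPolyRep (fun t => normSq ((Circle.exp t : ℂ) - α)) 1
      ((X - C α) * (1 - C (conj α) * X)) := by
  intro t
  have hz : conj (Circle.exp t : ℂ) * Circle.exp t = 1 := by
    rw [← Circle.coe_inv_eq_conj, ← Circle.coe_mul, inv_mul_cancel, Circle.coe_one]
  simp only [eval_mul, eval_sub, eval_X, eval_C, eval_one, pow_one, ← mul_conj, map_sub]
  linear_combination ((Circle.exp t : ℂ) - α) * hz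

/-- `|e^{it} - α|²`: the real factor carrying the pair of roots `α`, `(conj α)⁻¹` of a
representing polynomial. -/
def circleDistSq (α : ℂ) : TrigPolyRing :=
  ⟨_, (hasPolyRep_normSq_circleExp_sub α).mem⟩

variable {α : ℂ}

theorem circleDistSq_apply (t : ℝ) :
    (circleDistSq α : ℝ → ℝ) t = normSq ((Circle.exp t : ℂ) - α) := rfl

theorem circleDistSq_pos (hα : ‖α‖ ≠ 1) (t : ℝ) : 0 < (circleDistSq α : ℝ → ℝ) t := by
  refine circleDistSq_apply t ▸ normSq_pos.2 (sub_ne_zero.2 fun h => hα ?_)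
  rw [← h, Circle.norm_coe]

theorem isLeftRegular_circleDistSq (hα : ‖α‖ ≠ 1) : IsLeftRegular (circleDistSq α) :=
  fun _ _ h => Subtype.ext <| funext fun t =>
    mul_left_cancel₀ (circleDistSq_pos hα t).ne' (congrFun (congrArg Subtype.val h) t)

theorem circleDistSq_dvd {W : TrigPolyRing} {ℓ : ℕ} {w : ℂ[X]} (hW : HasPolyRep W ℓ w)
    (hα : α ≠ 0) (hα1 : ‖α‖ ≠ 1) (hroot : w.eval α = 0) : circleDistSq α ∣ W := by
  set β := (conj α)⁻¹
  have hβ : conj α * β = 1 := mul_inv_cancel₀ ((_root_.map_ne_zero _).2 hα)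
  have hαβ : α ≠ β := by
    intro h
    rw [← h, mul_comm, mul_conj] at hβ
    rw [Complex.norm_def, show normSq α = 1 by exact_mod_cast hβ, Real.sqrt_one] at hα1
    exact hα1 rfl
  -- `w = (X - α)(X - β) h`, while `|z - α|² z = -conj α (z - α)(z - β)` on the unit circle.
  obtain ⟨h, hwh⟩ := (isCoprime_X_sub_C_of_isUnit_sub (sub_ne_zero.2 hαβ).isUnit).mul_dvd
    (dvd_iff_isRoot.2 hroot) (dvd_iff_isRoot.2 (hW.eval_inv_conj_eq_zero hα hroot))
  have hG := fun t => (circleDistSq_pos hα1 t).ne'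
  have hV : HasPolyRep (fun t => (W : ℝ → ℝ) t / (circleDistSq α : ℝ → ℝ) t) ℓ
      (C (-β) * X * h) := by
    intro t
    refine mul_right_cancel₀ (ofReal_ne_zero.2 (hG t)) ?_
    have hGt : ((circleDistSq α : ℝ → ℝ) t : ℂ) * Circle.exp t =
        ((Circle.exp t : ℂ) - α) * (1 - conj α * Circle.exp t) := by
      simpa [circleDistSq_apply] using hasPolyRep_normSq_circleExp_sub α t
    simp only [eval_mul, eval_C, eval_X, ofReal_div]
    rw [div_mul_eq_mul_div, div_mul_cancel₀ _ (ofReal_ne_zero.2 (hG t)), hW t, hwh]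
    simp only [eval_mul, eval_sub, eval_X, eval_C]
    linear_combination (β * h.eval (Circle.exp t : ℂ)) * hGt -
      ((Circle.exp t : ℂ) - α) * h.eval (Circle.exp t : ℂ) * Circle.exp t * hβ
  refine ⟨⟨_, hV.mem⟩, Subtype.ext (funext fun t => ?_)⟩
  exact (mul_div_cancel₀ _ (hG t)).symm

theorem not_isUnit_circleDistSq (hα : α ≠ 0) : ¬IsUnit (circleDistSq α) := by
  intro h
  obtain ⟨V, hV⟩ := isUnit_iff_exists_inv.1 h
  obtain ⟨m, v, hv⟩ := exists_hasPolyRep V.2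
  have hrep : HasPolyRep (fun _ => (1 : ℝ)) (1 + m) ((X - C α) * (1 - C (conj α) * X) * v) := by
    convert (hasPolyRep_normSq_circleExp_sub α).mul hv using 1
    exact (congrArg Subtype.val hV).symm
  have h := congrArg (eval α) ((HasPolyRep.const 1).X_pow_mul_eq hrep)
  simp only [eval_mul, eval_pow, eval_X, eval_sub, eval_C, sub_self, zero_mul, pow_zero, one_mul,
    ofReal_one, mul_one] at h
  exact pow_ne_zero _ hα h

theorem irreducible_circleDistSq (hα : α ≠ 0) (hα1 : ‖α‖ ≠ 1) : Irreducible (circleDistSq α) := by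
  have key {U V : TrigPolyRing} {ℓ : ℕ} {u : ℂ[X]} (hu : HasPolyRep U ℓ u) (hroot : u.eval α = 0)
      (hUV : circleDistSq α = U * V) : IsUnit V := by
    obtain ⟨U', rfl⟩ := circleDistSq_dvd hu hα hα1 hroot
    refine IsUnit.of_mul_eq_one_right U' (isLeftRegular_circleDistSq hα1 ?_)
    change _ * (U' * V) = _ * 1
    rw [mul_one, ← mul_assoc, ← hUV]
  refine ⟨not_isUnit_circleDistSq hα, fun U V hUV => ?_⟩
  obtain ⟨ℓ, u, hu⟩ := exists_hasPolyRep U.2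
  obtain ⟨m, v, hv⟩ := exists_hasPolyRep V.2
  have hrep : HasPolyRep (circleDistSq α) (ℓ + m) (u * v) := congrArg Subtype.val hUV ▸ hu.mul hv
  have h := congrArg (eval α) ((hasPolyRep_normSq_circleExp_sub α).X_pow_mul_eq hrep)
  simp only [eval_mul, eval_pow, eval_X, eval_sub, eval_C, sub_self, zero_mul, mul_zero,
    pow_one] at h
  rcases mul_eq_zero.1 ((mul_eq_zero.1 h.symm).resolve_left hα) with h | h
  · exact Or.inr (key hu h hUV)
  · exact Or.inl (key hv h (hUV.trans (mul_comm U V)))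

end CircleDistSq

theorem Polynomial.exists_eq_C_mul_X_pow_of_dvd {K : Type*} [Field K] [IsAlgClosed K]
    [CharZero K] {p q : K[X]} {k : ℕ} (hroot : ∀ α ≠ 0, q.IsRoot α → ¬p.IsRoot α)
    (hdvd : q ∣ X ^ k * derivative q * p) : ∃ c b, q = C c * X ^ b := by
  rcases eq_or_ne q 0 with rfl | hq
  · exact ⟨0, 0, by simp⟩
  obtain ⟨q₀, hqq₀, hX⟩ := q.exists_eq_pow_rootMultiplicity_mul_and_not_dvd hq 0
  set b := q.rootMultiplicity 0
  rw [C_0, sub_zero] at hqq₀ hX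
  have hcop : IsCoprime q₀ (X ^ (k + b) * p) := by
    refine (isCoprime_iff_aeval_ne_zero_of_isAlgClosed K K q₀ _).2 fun α => ?_
    simp only [coe_aeval_eq_eval]
    rcases eq_or_ne α 0 with rfl | hα
    · left
      rwa [← coeff_zero_eq_eval_zero, Ne, ← X_dvd_iff]
    · by_contra! h
      simp only [eval_mul, eval_pow, eval_X, mul_eq_zero, pow_eq_zero_iff', hα, false_and,
        false_or] at h
      exact hroot α hα (by simp [IsRoot, hqq₀, h.1]) h.2
  have hdvd₀ : q₀ ∣ X ^ (k + b) * p * derivative q₀ := by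
    have h := (Dvd.intro_left _ hqq₀.symm).trans hdvd
    rw [hqq₀, derivative_mul,
      show X ^ k * (derivative (X ^ b) * q₀ + X ^ b * derivative q₀) * p =
        q₀ * (X ^ k * derivative (X ^ b) * p) + X ^ (k + b) * p * derivative q₀ by ring,
      dvd_add_right (dvd_mul_right _ _)] at h
    exact h
  have hq₀ := eq_C_of_derivative_eq_zero (dvd_derivative_iff.1 (hcop.dvd_of_dvd_mul_left hdvd₀))
  exact ⟨q₀.coeff 0, b, by rw [hqq₀, mul_comm, ← hq₀]⟩

section Abel

variable {A B P Q : ℝ → ℝ} {c : ℝ}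

theorem invariance_identity_on_curve {a b p p' q q' : ℝ} {k : ℝ → ℝ} (hp : p ≠ 0)
    (h : ∀ x, (q' - p' * x) + (a * x ^ 3 + b * x ^ 2) * (-p) = k x * (q - p * x)) :
    q' * p ^ 2 = q * (p' * p + a * q ^ 2 + b * q * p) := by
  have h₀ := h (q / p)
  rw [mul_div_cancel₀ _ hp, sub_self, mul_zero] at h₀
  field_simp at h₀
  linear_combination h₀

theorem deriv_eq_zero_of_forall_eq (hQc : ∀ t, Q t = c) : deriv Q = 0 := by
  rw [show Q = fun _ => c from funext hQc]
  exact funext fun t => deriv_const t c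

theorem abel_coeff_relation {K : ℝ → ℝ → ℝ} (hP0 : ∀ t, P t ≠ 0) (hc : c ≠ 0)
    (hQc : ∀ t, Q t = c)
    (hK : ∀ t x, (deriv Q t - deriv P t * x) + (A t * x ^ 3 + B t * x ^ 2) * (-(P t)) =
      K t x * (Q t - P t * x)) (t : ℝ) :
    deriv P t * P t + A t * c ^ 2 + B t * c * P t = 0 := by
  have h := invariance_identity_on_curve (hP0 t) (hK t)
  rw [deriv_eq_zero_of_forall_eq hQc, hQc t, Pi.zero_apply, zero_mul] at h
  exact (mul_eq_zero.1 h.symm).resolve_left hc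

theorem cofactor_eq {K : ℝ → ℝ → ℝ} (hP0 : ∀ t, P t ≠ 0) (hc : c ≠ 0) (hQc : ∀ t, Q t = c)
    (hKc : Continuous (Function.uncurry K))
    (hK : ∀ t x, (deriv Q t - deriv P t * x) + (A t * x ^ 3 + B t * x ^ 2) * (-(P t)) =
      K t x * (Q t - P t * x)) (t x : ℝ) :
    K t x = A t * x ^ 2 - deriv P t / c * x := by
  have hrel := abel_coeff_relation hP0 hc hQc hK t
  have hoff : EqOn (K t) (fun y => A t * y ^ 2 - deriv P t / c * y) {c / P t}ᶜ := by
    intro y hy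
    have hy : c - P t * y ≠ 0 := fun h =>
      hy (by rw [mem_singleton_iff, eq_div_iff (hP0 t)]; linarith)
    have h := hK t y
    rw [deriv_eq_zero_of_forall_eq hQc, hQc t, Pi.zero_apply] at h
    refine mul_right_cancel₀ hc (mul_right_cancel₀ hy ?_)
    beta_reduce
    rw [show (A t * y ^ 2 - deriv P t / c * y) * c = A t * y ^ 2 * c - deriv P t * y by
      field_simp]
    linear_combination -c * h - y ^ 2 * hrel
  have hcont : Continuous (K t) := hKc.comp (Continuous.prodMk_right t)
  exact congrFun (hcont.ext_on (dense_compl_singleton _) (by fun_prop) hoff) x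

theorem isInvariantCurve_of_forall_eq {R : ℝ → ℝ} (hc : c ≠ 0) (hQc : ∀ t, Q t = c)
    (hA : ∀ t, A t = P t / c * R t) (hB : ∀ t, B t = -deriv P t / c - R t)
    (hAc : Continuous A) (hPc : Continuous (deriv P)) : IsInvariantCurve A B Q P := by
  refine ⟨fun t x => A t * x ^ 2 - deriv P t / c * x, by fun_prop, fun t x => ?_⟩
  simp only [deriv_eq_zero_of_forall_eq hQc, hQc, Pi.zero_apply, hA, hB]
  field_simp
  ring

end Abel

theorem not_isRoot_of_isRoot_of_coprime {P Q : TrigPolyRing} {ℓ m : ℕ} {p q : ℂ[X]}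
    (hp : HasPolyRep P ℓ p) (hq : HasPolyRep Q m q) (hP0 : ∀ t, (P : ℝ → ℝ) t ≠ 0)
    (hcoprime : ¬∃ z : TrigPolyRing, Irreducible z ∧ z ∣ P ∧ z ∣ Q)
    {α : ℂ} (hα : α ≠ 0) (hqα : q.IsRoot α) : ¬p.IsRoot α := by
  intro hpα
  have hα1 : ‖α‖ ≠ 1 := fun h => hp.eval_ne_zero hP0 h hpα
  exact hcoprime ⟨circleDistSq α, irreducible_circleDistSq hα hα1,
    circleDistSq_dvd hp hα hα1 hpα, circleDistSq_dvd hq hα hα1 hqα⟩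

theorem deriv_eq_zero_of_isInvariantCurve {A B P Q : TrigPolyRing}
    (hP0 : ∀ t, (P : ℝ → ℝ) t ≠ 0) (hcoprime : ¬∃ z : TrigPolyRing, Irreducible z ∧ z ∣ P ∧ z ∣ Q)
    (hinv : IsInvariantCurve A B Q P) : deriv (Q : ℝ → ℝ) = 0 := by
  obtain ⟨K, -, hK⟩ := hinv
  let P' : TrigPolyRing := ⟨_, TrigPolyRing.deriv_mem P.2⟩
  let S := P' * P + A * Q ^ 2 + B * Q * P
  have hS : deriv (Q : ℝ → ℝ) * ((P : ℝ → ℝ) * P) = (Q : ℝ → ℝ) * S := funext fun t => by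
    simpa [S, P', sq] using invariance_identity_on_curve (hP0 t) (hK t)
  obtain ⟨ℓ, p, hp⟩ := exists_hasPolyRep P.2
  obtain ⟨m, q, hq⟩ := exists_hasPolyRep Q.2
  obtain ⟨n, s, hs⟩ := exists_hasPolyRep S.2
  have hq' := hq.deriv fun t => (TrigPolyRing.differentiable Q.2 t).hasDerivAt
  have hrel := (hS ▸ hq'.mul (hp.mul hp)).X_pow_mul_eq (hq.mul hs)
  have hdvd : q ∣ X ^ (m + n + 1) * derivative q * (p * p) := by
    have hI : C I * C (-I) = 1 := by rw [← C_mul, mul_neg, I_mul_I, neg_neg, C_1]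
    refine ⟨C (-I) * (X ^ (m + (ℓ + ℓ)) * s + C I * X ^ (m + n) * C (m : ℂ) * (p * p)), ?_⟩
    linear_combination C (-I) * hrel - (X ^ (m + n + 1) * derivative q * (p * p)) * hI
  obtain ⟨c, b, rfl⟩ := exists_eq_C_mul_X_pow_of_dvd (fun α hα hqα hpα =>
    not_isRoot_of_isRoot_of_coprime hp hq hP0 hcoprime hα hqα (by simpa [IsRoot] using hpα)) hdvd
  exact funext (hq.deriv_eq_zero_of_eq_C_mul_X_pow (TrigPolyRing.differentiable Q.2))

theorem exists_of_isInvariantCurve {A B P Q : TrigPolyRing} (hP0 : ∀ t, (P : ℝ → ℝ) t ≠ 0)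
    (hQ0 : Q ≠ 0) (hcoprime : ¬∃ z : TrigPolyRing, Irreducible z ∧ z ∣ P ∧ z ∣ Q)
    (hinv : IsInvariantCurve A B Q P) :
    ∃ c : ℝ, c ≠ 0 ∧ (∀ t, (Q : ℝ → ℝ) t = c) ∧ ∃ R : TrigPolyRing,
      (∀ t, (A : ℝ → ℝ) t = (P : ℝ → ℝ) t / c * (R : ℝ → ℝ) t) ∧
      (∀ t, (B : ℝ → ℝ) t = -deriv (P : ℝ → ℝ) t / c - (R : ℝ → ℝ) t) := by
  have hQc (t : ℝ) : (Q : ℝ → ℝ) t = (Q : ℝ → ℝ) 0 :=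
    is_const_of_deriv_eq_zero (TrigPolyRing.differentiable Q.2)
      (congrFun (deriv_eq_zero_of_isInvariantCurve hP0 hcoprime hinv)) t 0
  have hc : (Q : ℝ → ℝ) 0 ≠ 0 := fun h => hQ0 (Subtype.ext (funext fun t => (hQc t).trans h))
  obtain ⟨K, -, hK⟩ := hinv
  have hrel := abel_coeff_relation hP0 hc hQc hK
  refine ⟨_, hc, hQc, -(B + ((Q : ℝ → ℝ) 0)⁻¹ • ⟨_, TrigPolyRing.deriv_mem P.2⟩), fun t => ?_,
    fun t => ?_⟩
  · have hPt := hP0 t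
    simp only [Subalgebra.coe_neg, Subalgebra.coe_add, Subalgebra.coe_smul, Pi.neg_apply,
      Pi.add_apply, Pi.smul_apply, smul_eq_mul]
    field_simp
    linear_combination hrel t
  · simp only [Subalgebra.coe_neg, Subalgebra.coe_add, Subalgebra.coe_smul, Pi.neg_apply,
      Pi.add_apply, Pi.smul_apply, smul_eq_mul]
    ring

/-- Characterization of invariant curves `Q(t) - P(t)x = 0` of the Abel equation
`x' = A x³ + B x²` (with `P` nonvanishing, `Q ≠ 0`, and `P, Q` without common
irreducible factors): they occur exactly when `Q = c ≠ 0` is constant and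
`A = (P/c)R`, `B = -P'/c - R` for some trigonometric polynomial `R`; moreover
the cofactor is then `A x² - (P'/c) x`. -/
theorem invariant_curve_characterization
    (A B P Q : TrigPolyRing)
    (hP0 : ∀ t : ℝ, (P : ℝ → ℝ) t ≠ 0) (hQ0 : Q ≠ 0)
    (hcoprime : ¬ ∃ z : TrigPolyRing, Irreducible z ∧ z ∣ P ∧ z ∣ Q) :
    (IsInvariantCurve (A : ℝ → ℝ) (B : ℝ → ℝ) (Q : ℝ → ℝ) (P : ℝ → ℝ) ↔
      ∃ c : ℝ, c ≠ 0 ∧ (∀ t : ℝ, (Q : ℝ → ℝ) t = c) ∧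
        ∃ R : TrigPolyRing,
          (∀ t : ℝ, (A : ℝ → ℝ) t = (P : ℝ → ℝ) t / c * (R : ℝ → ℝ) t) ∧
          (∀ t : ℝ, (B : ℝ → ℝ) t = -(deriv (P : ℝ → ℝ) t) / c - (R : ℝ → ℝ) t)) ∧
    (∀ c : ℝ, c ≠ 0 → (∀ t : ℝ, (Q : ℝ → ℝ) t = c) →
      ∀ K : ℝ → ℝ → ℝ, Continuous (Function.uncurry K) →
        (∀ t x : ℝ,
          (deriv (Q : ℝ → ℝ) t - deriv (P : ℝ → ℝ) t * x) +
              ((A : ℝ → ℝ) t * x ^ 3 + (B : ℝ → ℝ) t * x ^ 2) * (-((P : ℝ → ℝ) t)) =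
            K t x * ((Q : ℝ → ℝ) t - (P : ℝ → ℝ) t * x)) →
        ∀ t x : ℝ, K t x = (A : ℝ → ℝ) t * x ^ 2 - deriv (P : ℝ → ℝ) t / c * x) := by
  refine ⟨⟨exists_of_isInvariantCurve hP0 hQ0 hcoprime, ?_⟩,
    fun c hc hQc K hKc hK => cofactor_eq hP0 hc hQc hKc hK⟩
  rintro ⟨c, hc, hQc, R, hA, hB⟩
  exact isInvariantCurve_of_forall_eq hc hQc hA hB (TrigPolyRing.differentiable A.2).continuous
    (TrigPolyRing.differentiable (TrigPolyRing.deriv_mem P.2)).continuous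
end
end

section
/- Let A, B be real trigonometric polynomials with A not identically zero. If deg(A) is odd, or if deg(B) > deg(A)/2, then the Abel equation x' = A(t)x^3 + B(t)x^2 has at most two pairwise distinct non-trivial invariant curves 1 − P(t)x = 0 with P a non-constant real trigonometric polynomial nonvanishing on ℝ. -/
open Real Set

noncomputable section

/-- A real trigonometric polynomial. -/
def IsTrigPoly (P : ℝ → ℝ) : Prop :=
  ∃ (n : ℕ) (a b : ℕ → ℝ), ∀ t : ℝ,
    P t = ∑ k ∈ Finset.range (n + 1), (a k * Real.cos (k * t) + b k * Real.sin (k * t))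

/-- The degree of a trigonometric polynomial: the least `n` such that `P` admits a
representation with harmonics only up to order `n`. -/
def trigDegree (P : ℝ → ℝ) : ℕ :=
  sInf {n : ℕ | ∃ a b : ℕ → ℝ, ∀ t : ℝ,
    P t = ∑ k ∈ Finset.range (n + 1), (a k * Real.cos (k * t) + b k * Real.sin (k * t))}

/-- The curve `1 - P(t)x = 0` is an invariant curve of the Abel equation
`x' = A(t)x³ + B(t)x²`. -/
def IsInvariantCurveOne (A B P : ℝ → ℝ) : Prop :=
  ∃ K : ℝ → ℝ → ℝ, Continuous (Function.uncurry K) ∧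
    ∀ t x : ℝ,
      (-(deriv P t) * x) + (A t * x ^ 3 + B t * x ^ 2) * (-(P t)) =
        K t x * (1 - P t * x)

/-!
Substituting `x = 1 / P` shows that `1 - P x = 0` is invariant exactly when
`P P' + B P + A = 0`. For two distinct such `P`, `Q`, subtracting the two identities gives
`A (P - Q) = (P - Q)' P Q`; since `A ≠ 0`, `P - Q` is not constant, and comparing degrees
(additive under products, unchanged by differentiation in positive degree) yields
`deg A = deg P + deg Q`. Three distinct curves therefore all have degree `deg A / 2`, so
`deg A` is even, and then `B P = -P P' - A` forces `deg B ≤ deg A / 2`.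
-/

open Complex Polynomial

theorem exp_ofReal_mul_I_pow (k : ℕ) (t : ℝ) : cexp (t * I) ^ k = cexp (k * t * I) := by
  rw [← Complex.exp_nat_mul]
  ring_nf

/-- `f t = e^{-int} p(e^{it})`. A trigonometric polynomial of exact degree `n` has such a
representation with `deg p = 2n`, unique up to powers of `X`; degrees are compared through it. -/
def HasCircleRep (f : ℝ → ℝ) (n : ℕ) (p : ℂ[X]) : Prop :=
  ∀ t : ℝ, (f t : ℂ) * cexp (n * t * I) = p.eval (cexp (t * I))

namespace HasCircleRep

variable {f g : ℝ → ℝ} {n m : ℕ} {p q : ℂ[X]}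

theorem neg (hf : HasCircleRep f n p) : HasCircleRep (fun t => -f t) n (-p) := fun t => by
  simp [← hf t]

theorem add (hf : HasCircleRep f n p) (hg : HasCircleRep g n q) :
    HasCircleRep (fun t => f t + g t) n (p + q) := fun t => by
  simp [← hf t, ← hg t, add_mul]

theorem mul (hf : HasCircleRep f n p) (hg : HasCircleRep g m q) :
    HasCircleRep (fun t => f t * g t) (n + m) (p * q) := fun t => by
  rw [eval_mul, ← hf t, ← hg t]
  push_cast
  rw [add_mul, add_mul, Complex.exp_add]
  ring

theorem X_pow_mul_eq (hp : HasCircleRep f n p) (hq : HasCircleRep f m q) :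
    X ^ m * p = X ^ n * q := by
  apply eq_of_infinite_eval_eq
  have hcircle : (Set.range fun t : ℝ => cexp (t * I)).Infinite := by
    refine Set.Infinite.of_image re ?_
    rw [← Set.range_comp]
    have : (re ∘ fun t : ℝ => cexp (t * I)) = Real.cos := funext fun t => by
      simp [Complex.exp_ofReal_mul_I_re]
    rw [this, Real.range_cos]
    exact Set.Icc_infinite (by norm_num)
  refine hcircle.mono ?_
  rintro _ ⟨t, rfl⟩
  simp only [Set.mem_ofPred_eq, eval_mul, eval_pow, eval_X, ← hp t, ← hq t, exp_ofReal_mul_I_pow]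
  ring

theorem le_of_degree (hp : HasCircleRep f n p) (hpd : p.degree = (2 * n : ℕ))
    (hq : HasCircleRep f m q) (hqd : q.degree ≤ (2 * m : ℕ)) : n ≤ m := by
  have hdeg := congrArg degree (hp.X_pow_mul_eq hq)
  rw [degree_mul, degree_mul, degree_X_pow, degree_X_pow, hpd] at hdeg
  have : ((m + 2 * n : ℕ) : WithBot ℕ) ≤ ((n + 2 * m : ℕ) : WithBot ℕ) := by
    rw [Nat.cast_add, Nat.cast_add, hdeg]
    gcongr
  have : m + 2 * n ≤ n + 2 * m := by exact_mod_cast this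
  omega

theorem eq_of_degree (hp : HasCircleRep f n p) (hpd : p.degree = (2 * n : ℕ))
    (hq : HasCircleRep f m q) (hqd : q.degree = (2 * m : ℕ)) : n = m :=
  le_antisymm (hp.le_of_degree hpd hq hqd.le) (hq.le_of_degree hqd hp hpd.le)

end HasCircleRep

theorem Polynomial.degree_mul_of_eq_two_mul {p q : ℂ[X]} {n m : ℕ} (hp : p.degree = (2 * n : ℕ))
    (hq : q.degree = (2 * m : ℕ)) : (p * q).degree = (2 * (n + m) : ℕ) := by
  rw [degree_mul, hp, hq, ← Nat.cast_add, mul_add]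

/-- `d/dt (e^{-int} p(e^{it})) = e^{-int} (circleDeriv n p)(e^{it})`. -/
def circleDeriv (n : ℕ) (p : ℂ[X]) : ℂ[X] := C I * (X * derivative p - C (n : ℂ) * p)

theorem coeff_circleDeriv (n : ℕ) (p : ℂ[X]) (k : ℕ) :
    (circleDeriv n p).coeff k = I * ((k : ℂ) - n) * p.coeff k := by
  rcases k with _ | k
  · simp [circleDeriv]
    ring
  · simp only [circleDeriv, coeff_C_mul, coeff_sub, coeff_X_mul, coeff_derivative]
    push_cast
    ring

theorem degree_circleDeriv_le {n : ℕ} {p : ℂ[X]} {N : ℕ} (hp : p.degree ≤ N) :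
    (circleDeriv n p).degree ≤ N := by
  rw [degree_le_iff_coeff_zero] at hp ⊢
  intro k hk
  rw [coeff_circleDeriv, hp k hk, mul_zero]

theorem degree_circleDeriv {n : ℕ} {p : ℂ[X]} (hp : p.degree = (2 * n : ℕ)) (hn : 0 < n) :
    (circleDeriv n p).degree = (2 * n : ℕ) := by
  refine degree_eq_of_le_of_coeff_ne_zero (degree_circleDeriv_le hp.le) ?_
  rw [coeff_circleDeriv]
  refine mul_ne_zero (mul_ne_zero I_ne_zero ?_) (coeff_ne_zero_of_eq_degree hp)
  push_cast
  rw [two_mul, add_sub_cancel_right]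
  exact_mod_cast hn.ne'

theorem HasCircleRep.deriv {f : ℝ → ℝ} {n : ℕ} {p : ℂ[X]} (hf : Differentiable ℝ f)
    (h : HasCircleRep f n p) : HasCircleRep (deriv f) n (circleDeriv n p) := fun t => by
  have hexp : ∀ c : ℂ, HasDerivAt (fun s : ℝ => cexp (c * s * I)) (cexp (c * t * I) * (c * I)) t :=
    fun c => by
      have := ((hasDerivAt_id t).ofReal_comp.const_mul c).mul_const I
      simpa using this.cexp
  have hlhs := (hf t).hasDerivAt.ofReal_comp.fun_mul (hexp n)
  have hrhs := (p.hasDerivAt (cexp (t * I))).comp t (by simpa using hexp 1)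
  have heq : (fun s : ℝ => (f s : ℂ) * cexp (n * s * I)) = fun s : ℝ => p.eval (cexp (s * I)) :=
    funext h
  rw [heq] at hlhs
  have := hlhs.unique hrhs
  simp only [circleDeriv, eval_mul, eval_C, eval_sub, eval_X, ← h t]
  linear_combination this

def trigSum (n : ℕ) (a b : ℕ → ℝ) (t : ℝ) : ℝ :=
  ∑ k ∈ Finset.range (n + 1), (a k * Real.cos (k * t) + b k * Real.sin (k * t))

def trigSumPoly (n : ℕ) (a b : ℕ → ℝ) : ℂ[X] :=
  ∑ k ∈ Finset.range (n + 1),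
    (C ((a k - b k * I) / 2) * X ^ (n + k) + C ((a k + b k * I) / 2) * X ^ (n - k))

theorem hasCircleRep_trigSum (n : ℕ) (a b : ℕ → ℝ) :
    HasCircleRep (trigSum n a b) n (trigSumPoly n a b) := fun t => by
  simp only [trigSum, trigSumPoly, eval_finsetSum, eval_add, eval_mul, eval_C, eval_pow, eval_X,
    exp_ofReal_mul_I_pow]
  push_cast
  rw [Finset.sum_mul]
  refine Finset.sum_congr rfl fun k hk => ?_
  have hkn : k ≤ n := Nat.lt_succ_iff.mp (Finset.mem_range.mp hk)
  have hplus : cexp (((n : ℂ) + k) * t * I) =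
      cexp (n * t * I) * (Complex.cos (k * t) + Complex.sin (k * t) * I) := by
    rw [← exp_mul_I, ← Complex.exp_add]
    ring_nf
  have hminus : cexp (((n - k : ℕ) : ℂ) * t * I) =
      cexp (n * t * I) * (Complex.cos (-(k * t)) + Complex.sin (-(k * t)) * I) := by
    rw [← exp_mul_I, ← Complex.exp_add, Nat.cast_sub hkn]
    ring_nf
  rw [hplus, hminus, Complex.cos_neg, Complex.sin_neg]
  linear_combination (b k * Complex.sin (k * t) * cexp (n * t * I)) * I_sq

theorem degree_trigSumPoly_le (n : ℕ) (a b : ℕ → ℝ) :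
    (trigSumPoly n a b).degree ≤ (2 * n : ℕ) := by
  refine degree_le_iff_coeff_zero _ _ |>.mpr fun m hm => ?_
  have hm : 2 * n < m := by exact_mod_cast hm
  simp only [trigSumPoly, finsetSum_coeff, coeff_add, coeff_C_mul_X_pow]
  refine Finset.sum_eq_zero fun k hk => ?_
  have := Finset.mem_range.mp hk
  rw [if_neg (by omega), if_neg (by omega), add_zero]

theorem coeff_trigSumPoly_two_mul {n : ℕ} (hn : 0 < n) (a b : ℕ → ℝ) :
    (trigSumPoly n a b).coeff (2 * n) = (a n - b n * I) / 2 := by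
  simp only [trigSumPoly, finsetSum_coeff, coeff_add, coeff_C_mul_X_pow]
  rw [Finset.sum_eq_single_of_mem n (Finset.self_mem_range_succ n)]
  · rw [if_pos (by omega), if_neg (by omega), add_zero]
  · intro k hk hkn
    have := Finset.mem_range.mp hk
    rw [if_neg (by omega), if_neg (by omega), add_zero]

theorem trigDegree_le {f : ℝ → ℝ} {n : ℕ} {a b : ℕ → ℝ} (h : ∀ t, f t = trigSum n a b t) :
    trigDegree f ≤ n :=
  Nat.sInf_le ⟨a, b, h⟩

theorem trigDegree_zero : trigDegree (0 : ℝ → ℝ) = 0 :=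
  Nat.eq_zero_of_le_zero (trigDegree_le (n := 0) (a := 0) (b := 0) fun t => by simp [trigSum])

theorem exists_trigSum_of_le {f : ℝ → ℝ} {n N : ℕ} {a b : ℕ → ℝ}
    (h : ∀ t, f t = trigSum n a b t) (hnN : n ≤ N) : ∃ a b, ∀ t, f t = trigSum N a b t := by
  refine ⟨fun k => if k ≤ n then a k else 0, fun k => if k ≤ n then b k else 0, fun t => ?_⟩
  have hsub := Finset.range_subset_range.mpr (Nat.succ_le_succ hnN)
  rw [h t, trigSum, trigSum, ← Finset.sum_subset hsub]
  · refine Finset.sum_congr rfl fun k hk => ?_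
    have hkn : k ≤ n := Nat.lt_succ_iff.mp (Finset.mem_range.mp hk)
    simp only [if_pos hkn]
  · intro k _ hk
    have hkn : ¬k ≤ n := by simpa [Nat.lt_succ_iff] using hk
    simp only [if_neg hkn, zero_mul, add_zero]

theorem trigSum_sub (n : ℕ) (a b a' b' : ℕ → ℝ) (t : ℝ) :
    trigSum n a b t - trigSum n a' b' t = trigSum n (a - a') (b - b') t := by
  simp only [trigSum, ← Finset.sum_sub_distrib, Pi.sub_apply]
  exact Finset.sum_congr rfl fun k _ => by ring

namespace IsTrigPoly

variable {f g : ℝ → ℝ}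

theorem exists_trigSum_trigDegree (hf : IsTrigPoly f) :
    ∃ a b, ∀ t, f t = trigSum (trigDegree f) a b t :=
  Nat.sInf_mem (s := {n | ∃ a b, ∀ t, f t = trigSum n a b t}) (let ⟨n, h⟩ := hf; ⟨n, h⟩)

theorem differentiable (hf : IsTrigPoly f) : Differentiable ℝ f := by
  obtain ⟨n, a, b, h⟩ := hf
  rw [funext h]
  fun_prop

theorem sub (hf : IsTrigPoly f) (hg : IsTrigPoly g) : IsTrigPoly (fun t => f t - g t) := by
  obtain ⟨n, a, b, hf⟩ := hf
  obtain ⟨m, a', b', hg⟩ := hg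
  obtain ⟨a, b, hf⟩ := exists_trigSum_of_le hf (Nat.le_add_right n m)
  obtain ⟨a', b', hg⟩ := exists_trigSum_of_le hg (Nat.le_add_left m n)
  exact ⟨n + m, a - a', b - b', fun t => by
    show f t - g t = trigSum (n + m) (a - a') (b - b') t
    rw [hf, hg, trigSum_sub]⟩

theorem eq_const_of_trigDegree_eq_zero (hf : IsTrigPoly f) (h0 : trigDegree f = 0) :
    ∃ c, f = fun _ => c := by
  obtain ⟨a, b, h⟩ := hf.exists_trigSum_trigDegree
  refine ⟨a 0, funext fun t => ?_⟩
  simp [h t, h0, trigSum]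

end IsTrigPoly

theorem top_coeff_ne_zero_of_trigDegree_eq {f : ℝ → ℝ} {n : ℕ} {a b : ℕ → ℝ}
    (h : ∀ t, f t = trigSum (n + 1) a b t) (hn : trigDegree f = n + 1) :
    a (n + 1) ≠ 0 ∨ b (n + 1) ≠ 0 := by
  by_contra! hab
  have : trigDegree f ≤ n := trigDegree_le (a := a) (b := b) fun t => by
    simp [h t, trigSum, Finset.sum_range_succ _ (n + 1), hab]
  omega

theorem IsTrigPoly.exists_hasCircleRep_degree_le {f : ℝ → ℝ} (hf : IsTrigPoly f) :
    ∃ p, HasCircleRep f (trigDegree f) p ∧ p.degree ≤ (2 * trigDegree f : ℕ) := by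
  obtain ⟨a, b, h⟩ := hf.exists_trigSum_trigDegree
  refine ⟨_, fun t => ?_, degree_trigSumPoly_le _ a b⟩
  rw [h t]
  exact hasCircleRep_trigSum _ a b t

theorem IsTrigPoly.exists_hasCircleRep_degree_eq {f : ℝ → ℝ} (hf : IsTrigPoly f) (hf0 : f ≠ 0) :
    ∃ p, HasCircleRep f (trigDegree f) p ∧ p.degree = (2 * trigDegree f : ℕ) := by
  obtain ⟨a, b, h⟩ := hf.exists_trigSum_trigDegree
  have hrep : HasCircleRep f (trigDegree f) (trigSumPoly (trigDegree f) a b) := fun t => by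
    rw [h t]
    exact hasCircleRep_trigSum _ a b t
  refine ⟨_, hrep, ?_⟩
  rcases Nat.eq_zero_or_eq_succ_pred (trigDegree f) with hn | hn
  · have hp0 : trigSumPoly (trigDegree f) a b ≠ 0 := by
      intro hp0
      refine hf0 (funext fun t => ?_)
      have := hrep t
      rw [hp0, eval_zero, mul_eq_zero] at this
      simpa [Complex.exp_ne_zero] using this
    rw [hn] at hp0 ⊢
    exact le_antisymm (degree_trigSumPoly_le 0 a b) (zero_le_degree_iff.mpr hp0)
  · rw [hn] at h ⊢
    refine degree_eq_of_le_of_coeff_ne_zero (degree_trigSumPoly_le _ a b) ?_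
    rw [coeff_trigSumPoly_two_mul (Nat.succ_pos _)]
    intro hc
    rcases top_coeff_ne_zero_of_trigDegree_eq h hn with ha | hb
    · exact ha (by simpa using congrArg re hc)
    · exact hb (by simpa using congrArg im hc)

theorem IsInvariantCurveOne.deriv_mul_add_eq_zero {A B P : ℝ → ℝ} (h : IsInvariantCurveOne A B P)
    (hP : ∀ t, P t ≠ 0) (t : ℝ) : deriv P t * P t + B t * P t + A t = 0 := by
  obtain ⟨K, -, hK⟩ := h
  have hx := hK t (P t)⁻¹
  rw [mul_inv_cancel₀ (hP t), sub_self, mul_zero] at hx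
  field_simp [hP t] at hx
  linear_combination -hx

section InvariantCurves

variable {A B P Q : ℝ → ℝ}

theorem trigDegree_eq_add_of_isInvariantCurveOne (hA : IsTrigPoly A) (hA0 : A ≠ 0)
    (hP : IsTrigPoly P) (hQ : IsTrigPoly Q) (hP0 : ∀ t, P t ≠ 0) (hQ0 : ∀ t, Q t ≠ 0)
    (hPA : IsInvariantCurveOne A B P) (hQA : IsInvariantCurveOne A B Q) (hPQ : P ≠ Q) :
    trigDegree A = trigDegree P + trigDegree Q := by
  set D := fun t => P t - Q t with hD_def
  have hD : IsTrigPoly D := hP.sub hQ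
  have hAD : ∀ t, A t * D t = deriv D t * (P t * Q t) := fun t => by
    rw [hD_def, deriv_fun_sub (hP.differentiable t) (hQ.differentiable t)]
    linear_combination P t * hQA.deriv_mul_add_eq_zero hQ0 t - Q t * hPA.deriv_mul_add_eq_zero hP0 t
  have hD0 : D ≠ 0 := fun h => hPQ (funext fun t => sub_eq_zero.mp (congrFun h t))
  have hδ : 0 < trigDegree D := by
    refine Nat.pos_of_ne_zero fun h0 => hA0 ?_
    obtain ⟨c, hc⟩ := hD.eq_const_of_trigDegree_eq_zero h0
    have hc0 : c ≠ 0 := fun h => hD0 (by rw [hc, h]; rfl)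
    funext t
    have := hAD t
    rw [hc, deriv_const, zero_mul, mul_eq_zero] at this
    exact this.resolve_right hc0
  obtain ⟨pA, hpA, hpA_deg⟩ := hA.exists_hasCircleRep_degree_eq hA0
  obtain ⟨pD, hpD, hpD_deg⟩ := hD.exists_hasCircleRep_degree_eq hD0
  obtain ⟨pP, hpP, hpP_deg⟩ := hP.exists_hasCircleRep_degree_eq fun h => hP0 0 (congrFun h 0)
  obtain ⟨pQ, hpQ, hpQ_deg⟩ := hQ.exists_hasCircleRep_degree_eq fun h => hQ0 0 (congrFun h 0)
  have hrhs := (hpD.deriv hD.differentiable).mul (hpP.mul hpQ)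
  rw [← funext hAD] at hrhs
  have := (hpA.mul hpD).eq_of_degree (degree_mul_of_eq_two_mul hpA_deg hpD_deg) hrhs
    (degree_mul_of_eq_two_mul (degree_circleDeriv hpD_deg hδ)
      (degree_mul_of_eq_two_mul hpP_deg hpQ_deg))
  omega

theorem trigDegree_le_of_isInvariantCurveOne (hA : IsTrigPoly A) (hB : IsTrigPoly B)
    (hP : IsTrigPoly P) (hP0 : ∀ t, P t ≠ 0) (hPA : IsInvariantCurveOne A B P)
    (hα : trigDegree A = 2 * trigDegree P) : trigDegree B ≤ trigDegree P := by
  rcases eq_or_ne B 0 with rfl | hB0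
  · rw [trigDegree_zero]
    exact Nat.zero_le _
  obtain ⟨pA, hpA, hpA_deg⟩ := hA.exists_hasCircleRep_degree_le
  obtain ⟨pB, hpB, hpB_deg⟩ := hB.exists_hasCircleRep_degree_eq hB0
  obtain ⟨pP, hpP, hpP_deg⟩ := hP.exists_hasCircleRep_degree_eq fun h => hP0 0 (congrFun h 0)
  rw [hα, two_mul (trigDegree P)] at hpA hpA_deg
  have hrhs := ((hpP.deriv hP.differentiable).mul hpP).add hpA
  have hlhs := (hpB.mul hpP).neg
  rw [show (fun t => -(B t * P t)) = fun t => deriv P t * P t + A t from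
    funext fun t => by linear_combination -hPA.deriv_mul_add_eq_zero hP0 t] at hlhs
  have hrhs_deg : (circleDeriv (trigDegree P) pP * pP + pA).degree ≤
      (2 * (trigDegree P + trigDegree P) : ℕ) := by
    refine (degree_add_le _ _).trans (max_le ((degree_mul_le _ _).trans ?_) hpA_deg)
    rw [mul_add, Nat.cast_add]
    exact add_le_add (degree_circleDeriv_le hpP_deg.le) hpP_deg.le
  have := hlhs.le_of_degree (by rw [degree_neg, degree_mul_of_eq_two_mul hpB_deg hpP_deg]) hrhs
    hrhs_deg
  omega

end InvariantCurves

theorem Set.encard_le_two_of_forall_ne {α : Type*} {s : Set α}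
    (h : ∀ x ∈ s, ∀ y ∈ s, ∀ z ∈ s, x ≠ y → x ≠ z → y ≠ z → False) : s.encard ≤ 2 := by
  by_contra! hs
  obtain ⟨t, hts, ht⟩ := Set.exists_subset_encard_eq (Order.add_one_le_of_lt hs)
  obtain ⟨x, y, z, hxy, hxz, hyz, rfl⟩ := Set.encard_eq_three.mp ht
  exact h x (hts (by simp)) y (hts (by simp)) z (hts (by simp)) hxy hxz hyz

/-- If `deg A` is odd or `deg B > deg A / 2`, then the Abel equation `x' = A x³ + B x²`
has at most two pairwise distinct non-trivial invariant curves `1 - P(t)x = 0`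
with `P` non-constant and nonvanishing. -/
theorem at_most_two_nontrivial_invariant_curves
    (A B : ℝ → ℝ) (hA : IsTrigPoly A) (hB : IsTrigPoly B) (hA0 : A ≠ 0)
    (hdeg : Odd (trigDegree A) ∨ trigDegree A < 2 * trigDegree B) :
    {P : ℝ → ℝ | IsTrigPoly P ∧ (∀ t : ℝ, P t ≠ 0) ∧
      (∀ c : ℝ, P ≠ fun _ => c) ∧ IsInvariantCurveOne A B P}.encard ≤ 2 := by
  refine Set.encard_le_two_of_forall_ne fun P₁ h₁ P₂ h₂ P₃ h₃ h₁₂ h₁₃ h₂₃ => ?_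
  obtain ⟨hP₁, hP₁0, -, hP₁A⟩ := h₁
  obtain ⟨hP₂, hP₂0, -, hP₂A⟩ := h₂
  obtain ⟨hP₃, hP₃0, -, hP₃A⟩ := h₃
  have h₁₂' := trigDegree_eq_add_of_isInvariantCurveOne hA hA0 hP₁ hP₂ hP₁0 hP₂0 hP₁A hP₂A h₁₂
  have h₁₃' := trigDegree_eq_add_of_isInvariantCurveOne hA hA0 hP₁ hP₃ hP₁0 hP₃0 hP₁A hP₃A h₁₃
  have h₂₃' := trigDegree_eq_add_of_isInvariantCurveOne hA hA0 hP₂ hP₃ hP₂0 hP₃0 hP₂A hP₃A h₂₃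
  have hα : trigDegree A = 2 * trigDegree P₁ := by omega
  rcases hdeg with hodd | hlt
  · exact Nat.not_odd_iff_even.mpr ⟨_, hα.trans (two_mul _)⟩ hodd
  · have := trigDegree_le_of_isInvariantCurveOne hA hB hP₁ hP₁0 hP₁A hα
    omega
end
end

section
/- Let P be a non-zero, non-unit element of the ring ℝ[cos t, sin t] of real trigonometric polynomials with P(t) ≠ 0 for all t ∈ ℝ. Then P has a factorization into irreducible elements of ℝ[cos t, sin t] that is unique up to the order of the factors and multiplication by units. -/
open Real Set

noncomputable section

/-!
Writing `z = e^{it}`, a trigonometric polynomial is `f(t) = z⁻ⁿ q(z)` with `q ∈ ℂ[X]` of degree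
at most `2n`. Since `f` is real, `q` equals its conjugate reflection `z²ⁿ q̄(1/z)`, so a nonzero
root `a` of `q` comes with the root `1/ā`. When `|a| ≠ 1` these two roots give the factor
`|e^{it} - a|² = e^{-it}(z - a)(1 - āz)` of `f`, and this positive trigonometric polynomial is
prime, because it divides `f` exactly when `q(a) = 0`.

The ring is Noetherian, so a nonzero non-unit is a product of irreducibles. An irreducible factor
of a nonvanishing `P` is nonvanishing, so its `q` has a nonzero root `a`, necessarily off the unit
circle (if `q` has no nonzero root, the factor is a nonzero constant). Hence the factor is
associated to the prime `|e^{it} - a|²`, and factorizations into primes are unique.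
-/

open Polynomial ComplexConjugate

theorem Polynomial.eq_of_forall_eval_circleExp_eq {p q : ℂ[X]}
    (h : ∀ t : ℝ, p.eval (Circle.exp t : ℂ) = q.eval (Circle.exp t : ℂ)) : p = q := by
  refine eq_of_infinite_eval_eq p q (Set.Infinite.mono ?_ ((Set.Icc_infinite zero_lt_one).image
    (Circle.coe_injective.comp_injOn (Circle.exp_injOn_Icc (by linarith [Real.pi_gt_three])))))
  rintro _ ⟨t, -, rfl⟩
  exact h t

theorem Polynomial.eq_C_mul_X_pow_of_forall_eval_ne_zero {K : Type*} [Field K] [IsAlgClosed K]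
    {q : K[X]} (h : ∀ a ≠ 0, q.eval a ≠ 0) : q = C q.leadingCoeff * X ^ q.natDegree := by
  rcases eq_or_ne q 0 with rfl | hq
  · simp
  have hroots : q.roots = Multiset.replicate q.natDegree 0 :=
    Multiset.eq_replicate.2 ⟨IsAlgClosed.card_roots_eq_natDegree, fun b hb => by
      by_contra hb0
      exact h b hb0 ((mem_roots hq).1 hb)⟩
  conv_lhs => rw [← C_leadingCoeff_mul_prod_multiset_X_sub_C (p := q)
    IsAlgClosed.card_roots_eq_natDegree, hroots]
  simp

theorem Polynomial.X_sub_C_mul_one_sub_C_mul_X_dvd {K : Type*} [Field K] {p : K[X]} {a c : K}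
    (hc : c ≠ 0) (hac : a ≠ c⁻¹) (ha : p.eval a = 0) (hc' : p.eval c⁻¹ = 0) :
    (X - C a) * (1 - C c * X) ∣ p := by
  have hfactor : (X - C a) * (1 - C c * X) = C (-c) * ((X - C a) * (X - C c⁻¹)) := by
    have hcc : C c * C c⁻¹ = (1 : K[X]) := by rw [← C_mul, mul_inv_cancel₀ hc, C_1]
    rw [C_neg]
    linear_combination -(X - C a) * hcc
  rw [hfactor, (isUnit_C.2 (Ne.isUnit (neg_ne_zero.2 hc))).mul_left_dvd]
  exact (isCoprime_X_sub_C_of_isUnit_sub (sub_ne_zero.2 hac).isUnit).mul_dvd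
    (dvd_iff_isRoot.2 ha) (dvd_iff_isRoot.2 hc')

def HasExpRep (f : ℝ → ℝ) (n : ℕ) (q : ℂ[X]) : Prop :=
  ∀ t : ℝ, (Circle.exp t : ℂ) ^ n * f t = q.eval (Circle.exp t : ℂ)

namespace HasExpRep

variable {f g : ℝ → ℝ} {m n : ℕ} {p q r : ℂ[X]}

theorem X_pow_mul_eq (hp : HasExpRep f m p) (hq : HasExpRep f n q) : X ^ n * p = X ^ m * q :=
  eq_of_forall_eval_circleExp_eq fun t => by
    simp only [eval_mul, eval_pow, eval_X, ← hp t, ← hq t]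
    ring

theorem eq_zero_iff (hq : HasExpRep f n q) : f = 0 ↔ q = 0 := by
  constructor
  · rintro rfl
    exact eq_of_forall_eval_circleExp_eq fun t => by rw [← hq t]; simp
  · rintro rfl
    funext t
    simpa using hq t

theorem add (hf : HasExpRep f m p) (hg : HasExpRep g n q) :
    HasExpRep (f + g) (m + n) (X ^ n * p + X ^ m * q) := fun t => by
  simp only [Pi.add_apply, eval_add, eval_mul, eval_pow, eval_X, Complex.ofReal_add, ← hf t,
    ← hg t]
  ring

theorem mul (hf : HasExpRep f m p) (hg : HasExpRep g n q) :
    HasExpRep (f * g) (m + n) (p * q) := fun t => by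
  simp only [Pi.mul_apply, eval_mul, pow_add, Complex.ofReal_mul, ← hf t, ← hg t]
  ring

theorem div (hf : HasExpRep f n (p * r)) (hg : HasExpRep g m p) (hg0 : ∀ t, g t ≠ 0) :
    HasExpRep (f / g) n (X ^ m * r) := fun t => by
  have hft := hf t
  rw [eval_mul, ← hg t] at hft
  have hgt : (g t : ℂ) ≠ 0 := Complex.ofReal_ne_zero.2 (hg0 t)
  rw [Pi.div_apply, Complex.ofReal_div, eval_mul, eval_pow, eval_X]
  field_simp
  linear_combination hft

theorem map_conj_reflect (hd : q.natDegree ≤ 2 * n) (hq : HasExpRep f n q) :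
    (q.reflect (2 * n)).map (starRingEnd ℂ) = q := by
  refine eq_of_forall_eval_circleExp_eq fun t => ?_
  set z : ℂ := (Circle.exp t : ℂ)
  have hqz : z ^ n * f t = q.eval z := hq t
  have hz : z ≠ 0 := Circle.coe_ne_zero _
  have hzc : conj z = z⁻¹ := (Circle.coe_inv_eq_conj _).symm
  let _ := invertibleOfNonzero (inv_ne_zero hz)
  have key := eval₂_reflect_mul_pow (starRingEnd ℂ) z⁻¹ (2 * n) q hd
  rw [invOf_eq_inv, inv_inv, ← hzc, eval₂_at_apply, ← hqz, map_mul, map_pow, hzc,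
    Complex.conj_ofReal, inv_pow, inv_pow, ← div_eq_mul_inv, div_eq_iff (pow_ne_zero _ hz)] at key
  rw [eval_map, key, ← hqz, two_mul, pow_add]
  field_simp

theorem eval_inv_conj_eq_zero (hd : q.natDegree ≤ 2 * n) (hq : HasExpRep f n q) {a : ℂ}
    (ha0 : a ≠ 0) (ha : q.eval a = 0) : q.eval (conj a)⁻¹ = 0 := by
  let _ := invertibleOfNonzero ((map_ne_zero (starRingEnd ℂ)).2 ha0)
  rw [← hq.map_conj_reflect hd, eval_map, ← invOf_eq_inv, eval₂_reflect_eq_zero_iff _ _ _ _ hd,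
    eval₂_at_apply, ha, map_zero]

theorem apply_arg_eq_zero (hq : HasExpRep f n q) {a : ℂ} (ha : q.eval a = 0) (ha1 : ‖a‖ = 1) :
    f (Complex.arg a) = 0 := by
  have hexp : (Circle.exp (Complex.arg a) : ℂ) = a := by
    simpa [ha1] using Complex.norm_mul_exp_arg_mul_I a
  have h := hq (Complex.arg a)
  rw [hexp, ha] at h
  have ha0 : a ≠ 0 := norm_ne_zero_iff.1 (by rw [ha1]; exact one_ne_zero)
  exact_mod_cast (mul_eq_zero.1 h).resolve_left (pow_ne_zero _ ha0)

end HasExpRep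

theorem hasExpRep_const (c : ℝ) : HasExpRep (fun _ => c) 0 (C (c : ℂ)) := fun t => by simp

theorem hasExpRep_cos : HasExpRep Real.cos 1 (C (1 / 2) * (X ^ 2 + 1)) := fun t => by
  simp only [pow_one, Complex.ofReal_cos, Complex.cos, Circle.coe_exp, eval_mul, eval_C, eval_add,
    eval_pow, eval_X, eval_one, neg_mul, Complex.exp_neg]
  field_simp

theorem hasExpRep_sin : HasExpRep Real.sin 1 (C (-Complex.I / 2) * (X ^ 2 - 1)) := fun t => by
  simp only [pow_one, Complex.ofReal_sin, Complex.sin, Circle.coe_exp, eval_mul, eval_C, eval_sub,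
    eval_pow, eval_X, eval_one, neg_mul, Complex.exp_neg]
  field_simp
  ring

theorem hasExpRep_normSq_circleExp_sub (a : ℂ) :
    HasExpRep (fun t => Complex.normSq (Circle.exp t - a)) 1
      ((X - C a) * (1 - C (conj a) * X)) := fun t => by
  have hinv : (Circle.exp t : ℂ) * conj (Circle.exp t : ℂ) = 1 := by
    rw [← Circle.coe_inv_eq_conj, Circle.coe_inv, mul_inv_cancel₀ (Circle.coe_ne_zero _)]
  rw [← Complex.mul_conj, map_sub]
  simp only [eval_mul, eval_sub, eval_X, eval_C, eval_one, pow_one]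
  linear_combination (Circle.exp t - a : ℂ) * hinv

namespace TrigPolyRing

theorem aeval_cos_mem (p : ℝ[X]) : aeval Real.cos p ∈ TrigPolyRing :=
  Algebra.adjoin_mono (by simp) (aeval_mem_adjoin_singleton ℝ Real.cos)

theorem cos_intCast_mul_mem (m : ℤ) : (fun t => Real.cos (m * t)) ∈ TrigPolyRing := by
  convert aeval_cos_mem (Chebyshev.T ℝ m) using 1
  ext t
  simp

theorem sin_intCast_mul_mem (m : ℤ) : (fun t => Real.sin (m * t)) ∈ TrigPolyRing := by
  convert mul_mem (aeval_cos_mem (Chebyshev.U ℝ (m - 1)))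
    (Algebra.subset_adjoin (by simp) : Real.sin ∈ TrigPolyRing) using 1
  ext t
  rw [Pi.mul_apply, aeval_fn_apply, coe_aeval_eq_eval, Chebyshev.U_real_cos]
  push_cast
  ring_nf

theorem re_mul_circleExp_mem (c : ℂ) (m : ℤ) :
    (fun t => (c * Circle.exp (m * t)).re) ∈ TrigPolyRing := by
  convert sub_mem (Subalgebra.smul_mem _ (cos_intCast_mul_mem m) c.re)
    (Subalgebra.smul_mem _ (sin_intCast_mul_mem m) c.im) using 1
  ext t
  simp only [Pi.sub_apply, Pi.smul_apply, smul_eq_mul, Complex.mul_re, Circle.coe_exp,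
    Complex.exp_ofReal_mul_I_re, Complex.exp_ofReal_mul_I_im]

theorem mem_of_hasExpRep {f : ℝ → ℝ} {n : ℕ} {q : ℂ[X]} (hq : HasExpRep f n q) :
    f ∈ TrigPolyRing := by
  have hf : f = ∑ k ∈ Finset.range (q.natDegree + 1),
      fun t => (q.coeff k * Circle.exp (((k - n : ℤ) : ℝ) * t)).re := by
    ext t
    have hz : (Circle.exp t : ℂ) ^ n ≠ 0 := pow_ne_zero _ (Circle.coe_ne_zero _)
    have hsum : (f t : ℂ) = ∑ k ∈ Finset.range (q.natDegree + 1),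
        q.coeff k * (Circle.exp (((k - n : ℤ) : ℝ) * t) : ℂ) := by
      simp only [Circle.exp_intCast_mul, Circle.coe_zpow, zpow_sub₀ (Circle.coe_ne_zero _),
        zpow_natCast, mul_div_assoc', ← Finset.sum_div, ← eval_eq_sum_range, ← hq t]
      field_simp
    rw [Finset.sum_apply, ← Complex.re_sum, ← hsum, Complex.ofReal_re]
  rw [hf]
  exact Subalgebra.sum_mem _ fun k _ => re_mul_circleExp_mem _ _

theorem exists_hasExpRep {f : ℝ → ℝ} (hf : f ∈ TrigPolyRing) :
    ∃ n q, q.natDegree ≤ 2 * n ∧ HasExpRep f n q := by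
  induction hf using Algebra.adjoin_induction with
  | mem g hg =>
    rcases hg with rfl | rfl
    · exact ⟨1, _, by compute_degree, hasExpRep_cos⟩
    · exact ⟨1, _, by compute_degree, hasExpRep_sin⟩
  | algebraMap c => exact ⟨0, _, by simp, hasExpRep_const c⟩
  | add f g _ _ hf hg =>
    obtain ⟨m, p, hp, hfp⟩ := hf
    obtain ⟨n, q, hq, hgq⟩ := hg
    refine ⟨m + n, _, ?_, hfp.add hgq⟩
    refine natDegree_add_le_of_degree_le ?_ ?_ <;>
      refine (natDegree_mul_le).trans ?_ <;> simp only [natDegree_X_pow] <;> omega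
  | mul f g _ _ hf hg =>
    obtain ⟨m, p, hp, hfp⟩ := hf
    obtain ⟨n, q, hq, hgq⟩ := hg
    exact ⟨m + n, _, natDegree_mul_le.trans (by omega), hfp.mul hgq⟩

instance : NoZeroDivisors TrigPolyRing where
  eq_zero_or_eq_zero_of_mul_eq_zero {f g} hfg := by
    obtain ⟨m, p, -, hp⟩ := exists_hasExpRep f.2
    obtain ⟨n, q, -, hq⟩ := exists_hasExpRep g.2
    have hpq : p * q = 0 := (hp.mul hq).eq_zero_iff.1 (congrArg Subtype.val hfg)
    exact (mul_eq_zero.1 hpq).imp (fun h => Subtype.ext (hp.eq_zero_iff.2 h))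
      (fun h => Subtype.ext (hq.eq_zero_iff.2 h))

instance : IsDomain TrigPolyRing := NoZeroDivisors.to_isDomain _

instance : IsNoetherianRing TrigPolyRing :=
  isNoetherianRing_of_fg (Subalgebra.fg_def.2 ⟨_, Set.toFinite {Real.cos, Real.sin}, rfl⟩)

def sqDist (a : ℂ) : TrigPolyRing :=
  ⟨fun t => Complex.normSq (Circle.exp t - a), mem_of_hasExpRep (hasExpRep_normSq_circleExp_sub a)⟩

theorem sqDist_pos {a : ℂ} (ha1 : ‖a‖ ≠ 1) (t : ℝ) : 0 < (sqDist a : ℝ → ℝ) t :=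
  Complex.normSq_pos.2 (sub_ne_zero.2 fun h => ha1 (h ▸ Circle.norm_coe _))

theorem eval_eq_zero_of_sqDist_dvd {a : ℂ} (ha0 : a ≠ 0) {f : TrigPolyRing} {n : ℕ} {q : ℂ[X]}
    (hdvd : sqDist a ∣ f) (hq : HasExpRep f n q) : q.eval a = 0 := by
  obtain ⟨g, rfl⟩ := hdvd
  obtain ⟨m, p, -, hp⟩ := exists_hasExpRep g.2
  have h := congrArg (eval a) (((hasExpRep_normSq_circleExp_sub a).mul hp).X_pow_mul_eq hq)
  simp only [eval_mul, eval_pow, eval_X, eval_sub, eval_C, sub_self, zero_mul, mul_zero] at h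
  exact (mul_eq_zero.1 h.symm).resolve_left (pow_ne_zero _ ha0)

theorem sqDist_dvd_of_eval_eq_zero {a : ℂ} (ha0 : a ≠ 0) (ha1 : ‖a‖ ≠ 1) {f : TrigPolyRing}
    {n : ℕ} {q : ℂ[X]} (hd : q.natDegree ≤ 2 * n) (hq : HasExpRep f n q) (ha : q.eval a = 0) :
    sqDist a ∣ f := by
  have hconj : conj a ≠ 0 := (map_ne_zero (starRingEnd ℂ)).2 ha0
  have hne : a ≠ (conj a)⁻¹ := by
    rw [Ne, ← mul_eq_one_iff_eq_inv₀ hconj, Complex.mul_conj, ← Complex.ofReal_one,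
      Complex.ofReal_inj, Complex.normSq_eq_norm_sq, pow_eq_one_iff_of_nonneg (norm_nonneg a)
      two_ne_zero]
    exact ha1
  obtain ⟨r, rfl⟩ := X_sub_C_mul_one_sub_C_mul_X_dvd hconj hne ha
    (hq.eval_inv_conj_eq_zero hd ha0 ha)
  have hdiv := hq.div (hasExpRep_normSq_circleExp_sub a) fun t => (sqDist_pos ha1 t).ne'
  exact ⟨⟨_, mem_of_hasExpRep hdiv⟩,
    Subtype.ext (funext fun t => (mul_div_cancel₀ _ (sqDist_pos ha1 t).ne').symm)⟩

theorem prime_sqDist {a : ℂ} (ha0 : a ≠ 0) (ha1 : ‖a‖ ≠ 1) : Prime (sqDist a) := by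
  refine ⟨fun h => (sqDist_pos ha1 0).ne' (congrFun (congrArg Subtype.val h) 0), fun hu => ?_,
    fun f g hfg => ?_⟩
  · have hone : HasExpRep ((1 : TrigPolyRing) : ℝ → ℝ) 0 (C 1) := hasExpRep_const 1
    simpa using eval_eq_zero_of_sqDist_dvd ha0 hu.dvd hone
  · obtain ⟨m, p, hp, hfp⟩ := exists_hasExpRep f.2
    obtain ⟨n, q, hq, hgq⟩ := exists_hasExpRep g.2
    have h := eval_eq_zero_of_sqDist_dvd ha0 hfg (hfp.mul hgq)
    rw [eval_mul, mul_eq_zero] at h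
    exact h.imp (sqDist_dvd_of_eval_eq_zero ha0 ha1 hp hfp)
      (sqDist_dvd_of_eval_eq_zero ha0 ha1 hq hgq)

theorem isUnit_of_forall_eval_ne_zero {f : TrigPolyRing} (hf : ∀ t, (f : ℝ → ℝ) t ≠ 0)
    {n : ℕ} {q : ℂ[X]} (hd : q.natDegree ≤ 2 * n) (hq : HasExpRep f n q)
    (hroots : ∀ a ≠ 0, q.eval a ≠ 0) : IsUnit f := by
  have hc : q.leadingCoeff ≠ 0 :=
    leadingCoeff_ne_zero.2 fun h => hf 0 (congrFun (hq.eq_zero_iff.2 h) 0)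
  have hmono := eq_C_mul_X_pow_of_forall_eval_ne_zero hroots
  set c := q.leadingCoeff
  set k := q.natDegree
  have hk : k = n := by
    have h := hq.map_conj_reflect hd
    rw [hmono, reflect_C_mul_X_pow, revAt_le hd, Polynomial.map_mul, map_C, Polynomial.map_pow,
      map_X] at h
    have := congrArg natDegree h
    rw [natDegree_C_mul_X_pow _ _ ((map_ne_zero (starRingEnd ℂ)).2 hc),
      natDegree_C_mul_X_pow _ _ hc] at this
    omega
  have hconst : ∀ t, ((f : ℝ → ℝ) t : ℂ) = c := fun t => by
    have h := hq t
    rw [hmono, hk, eval_mul, eval_C, eval_pow, eval_X, mul_comm c] at h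
    exact mul_left_cancel₀ (pow_ne_zero _ (Circle.coe_ne_zero _)) h
  have hf_eq : f = algebraMap ℝ TrigPolyRing ((f : ℝ → ℝ) 0) :=
    Subtype.ext (funext fun t => by exact_mod_cast (hconst t).trans (hconst 0).symm)
  rw [hf_eq]
  exact (isUnit_iff_ne_zero.2 (hf 0)).map _

theorem prime_of_irreducible_of_forall_ne_zero {z : TrigPolyRing} (hz : Irreducible z)
    (hz0 : ∀ t, (z : ℝ → ℝ) t ≠ 0) : Prime z := by
  obtain ⟨n, q, hd, hq⟩ := exists_hasExpRep z.2
  obtain ⟨a, ha0, ha⟩ : ∃ a ≠ 0, q.eval a = 0 := by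
    by_contra! h
    exact hz.not_isUnit (isUnit_of_forall_eval_ne_zero hz0 hd hq h)
  have ha1 : ‖a‖ ≠ 1 := fun h => hz0 _ (hq.apply_arg_eq_zero ha h)
  have hprime := prime_sqDist ha0 ha1
  obtain ⟨g, hg⟩ := sqDist_dvd_of_eval_eq_zero ha0 ha1 hd hq ha
  have hg_unit : IsUnit g := (hz.isUnit_or_isUnit hg).resolve_left hprime.not_isUnit
  exact hg ▸ (associated_mul_unit_right _ _ hg_unit).prime hprime

end TrigPolyRing

/-- A non-zero non-unit trigonometric polynomial `P` that is nonvanishing on `ℝ`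
has a factorization into irreducibles, unique up to order and multiplication by units. -/
theorem nonvanishing_trig_poly_unique_factorization
    (P : TrigPolyRing) (hP0 : P ≠ 0) (hPu : ¬ IsUnit P)
    (hP : ∀ t : ℝ, (P : ℝ → ℝ) t ≠ 0) :
    (∃ l : Multiset TrigPolyRing, (∀ z ∈ l, Irreducible z) ∧ l.prod = P) ∧
    (∀ l₁ l₂ : Multiset TrigPolyRing,
      (∀ z ∈ l₁, Irreducible z) → (∀ z ∈ l₂, Irreducible z) →
      l₁.prod = P → l₂.prod = P → Multiset.Rel Associated l₁ l₂) := by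
  have hprime : ∀ l : Multiset TrigPolyRing, (∀ z ∈ l, Irreducible z) → l.prod = P →
      ∀ z ∈ l, Prime z := by
    rintro l hl rfl z hz
    obtain ⟨c, hc⟩ := Multiset.dvd_prod hz
    refine TrigPolyRing.prime_of_irreducible_of_forall_ne_zero (hl z hz) fun t ht => hP t ?_
    rw [hc, Subalgebra.coe_mul, Pi.mul_apply, ht, zero_mul]
  obtain ⟨l, hl, hprod, -⟩ := (WfDvdMonoid.not_isUnit_iff_exists_factors_eq P hP0).1 hPu
  refine ⟨⟨l, hl, hprod⟩, fun l₁ l₂ h₁ h₂ e₁ e₂ => ?_⟩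
  exact prime_factors_unique (hprime l₁ h₁ e₁) (hprime l₂ h₂ e₂) (.of_eq (e₁.trans e₂.symm))
end
end
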